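/- Let G be a finite set of C¹ diffeomorphisms of ℝ, closed under taking inverses, with every g ∈ G having everywhere positive derivative. Let a > 0, let 0 < ε₁ < a/100, and let δ₀ > 0 be a logarithmic modulus of continuity for G with respect to ε₁. Suppose x ∈ ℝ satisfies λ_*(x) > a. Then for every integer n ≥ 1 there exists a word h in G such that, setting y = h(x), J = [y − δ₀/2, y + δ₀/2] and I = h⁻¹(J), the following hold: x ∈ I; h'(z) > e^{n a/2} for every z ∈ I; and the length of the interval I is less than δ₀ · e^{−n a/2}. -/

import Mathlib

open MeasureTheory Filter Topology

/-- Composition of a list of maps: the list `[g_k, …, g₁]` composes to `g_k ∘ ⋯ ∘ g₁`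
(the empty list gives the identity map). -/
def wordComp (w : List (ℝ → ℝ)) : ℝ → ℝ := w.foldr (· ∘ ·) id

/-- A word in `G` is a finite list of elements of `G`. -/
def IsWord (G : Finset (ℝ → ℝ)) (w : List (ℝ → ℝ)) : Prop := ∀ g ∈ w, g ∈ G

/-- The maximal `n`-expansion `μ_n(x)`. -/
noncomputable def maxExp (G : Finset (ℝ → ℝ)) (n : ℕ) (x : ℝ) : ℝ :=
  sSup {d : ℝ | ∃ w : List (ℝ → ℝ), IsWord G w ∧ w.length ≤ n ∧ d = deriv (wordComp w) x}

/-- The transverse expansion exponent `λ_*(x) = limsup_n log(μ_n(x))/n`, in `[0,∞]`. -/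
noncomputable def expExponent (G : Finset (ℝ → ℝ)) (x : ℝ) : ENNReal :=
  Filter.limsup (fun n : ℕ => ENNReal.ofReal (Real.log (maxExp G n x) / n)) Filter.atTop

/-- `δ₀` is a logarithmic modulus of continuity for `G` with respect to `ε₁`:
points at distance at most `δ₀` have logarithmic derivatives within `ε₁` for each `g ∈ G`. -/
def LogModulus (G : Finset (ℝ → ℝ)) (ε₁ δ₀ : ℝ) : Prop :=
  ∀ g ∈ G, ∀ y z : ℝ, |y - z| ≤ δ₀ → |Real.log (deriv g y) - Real.log (deriv g z)| ≤ ε₁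

/-!
Take a word `w` of length `m ≥ n` with `w'(x) > e^{ma}` and keep its innermost part `h`,
cutting at the index that maximizes `(w.drop j)'(x) · e^{jε₁}`. Then every block of outer
letters of `h` of length `i` expands by at least `e^{iε₁}` along the orbit of `x`, so the interval
of radius `δ₀/2` about `h(x)` can be pulled back one letter at a time, each intermediate interval
staying of radius at most `δ₀`. There the modulus of continuity costs a factor at most `e^{ε₁}`
per letter, so on `I` the derivative of `h` is at least `h'(x) e^{-|h|ε₁} > e^{na/2}` and `I` has
length at most `δ₀ e^{|h|ε₁} / h'(x) < δ₀ e^{-na/2}`.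
-/

open Real

section

variable {G : Finset (ℝ → ℝ)}

lemma deriv_wordComp_nil (x : ℝ) : deriv (wordComp []) x = 1 := by
  simp [wordComp]

lemma IsWord.of_cons {g : ℝ → ℝ} {w : List (ℝ → ℝ)} (hw : IsWord G (g :: w)) : IsWord G w :=
  fun f hf => hw f (List.mem_cons_of_mem g hf)

lemma IsWord.drop {w : List (ℝ → ℝ)} (hw : IsWord G w) (i : ℕ) : IsWord G (w.drop i) :=
  fun f hf => hw f (List.mem_of_mem_drop hf)

lemma IsWord.differentiable_wordComp (hdiff : ∀ g ∈ G, Differentiable ℝ g)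
    {w : List (ℝ → ℝ)} (hw : IsWord G w) : Differentiable ℝ (wordComp w) := by
  induction w with
  | nil => exact differentiable_id
  | cons g w ih => exact (hdiff g (hw g List.mem_cons_self)).comp (ih hw.of_cons)

lemma IsWord.deriv_wordComp_cons (hdiff : ∀ g ∈ G, Differentiable ℝ g) {g : ℝ → ℝ}
    {w : List (ℝ → ℝ)} (hw : IsWord G (g :: w)) (x : ℝ) :
    deriv (wordComp (g :: w)) x = deriv g (wordComp w x) * deriv (wordComp w) x :=
  deriv_comp x ((hdiff g (hw g List.mem_cons_self)) _)
    ((hw.of_cons.differentiable_wordComp hdiff) x)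

lemma IsWord.deriv_wordComp_pos (hdiff : ∀ g ∈ G, Differentiable ℝ g)
    (hpos : ∀ g ∈ G, ∀ y, 0 < deriv g y) {w : List (ℝ → ℝ)} (hw : IsWord G w) (x : ℝ) :
    0 < deriv (wordComp w) x := by
  induction w with
  | nil => simp [deriv_wordComp_nil]
  | cons g w ih =>
    rw [hw.deriv_wordComp_cons hdiff]
    exact mul_pos (hpos g (hw g List.mem_cons_self) _) (ih hw.of_cons)

lemma abs_sub_le_of_abs_image_sub_le {g : ℝ → ℝ} (hg : Differentiable ℝ g) (hmono : StrictMono g)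
    {c r y₀ : ℝ} (hr : 0 ≤ r) (hc : ∀ u, |u - y₀| ≤ r → c ≤ deriv g u) {y : ℝ}
    (hy : |g y - g y₀| ≤ c * r) : |y - y₀| ≤ r := by
  have hmvt : ∀ u ∈ Set.Icc (y₀ - r) (y₀ + r), ∀ v ∈ Set.Icc (y₀ - r) (y₀ + r), u ≤ v →
      c * (v - u) ≤ g v - g u :=
    (convex_Icc _ _).mul_sub_le_image_sub_of_le_deriv hg.continuous.continuousOn
      hg.differentiableOn fun u hu => hc u (abs_sub_le_iff.2 ⟨by linarith [(interior_subset hu).2],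
        by linarith [(interior_subset hu).1]⟩)
  have hy₀ : y₀ ∈ Set.Icc (y₀ - r) (y₀ + r) := ⟨by linarith, by linarith⟩
  rw [abs_le] at hy ⊢
  by_contra! hout
  rcases le_or_gt (-r) (y - y₀) with hlow | hlow
  · have hright := hmvt y₀ hy₀ (y₀ + r) ⟨by linarith, le_rfl⟩ (by linarith)
    have := hmono (show y₀ + r < y by linarith [hout hlow])
    linarith
  · have hleft := hmvt (y₀ - r) ⟨le_rfl, by linarith⟩ y₀ hy₀ (by linarith)
    have := hmono (show y < y₀ - r by linarith)
    linarith

lemma LogModulus.deriv_le_exp_mul {ε δ : ℝ} (hmod : LogModulus G ε δ)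
    (hpos : ∀ g ∈ G, ∀ y, 0 < deriv g y) {g : ℝ → ℝ} (hg : g ∈ G) {u v : ℝ} (huv : |u - v| ≤ δ) :
    deriv g v ≤ exp ε * deriv g u := by
  have hlog := (abs_le.1 (hmod g hg u v huv)).1
  calc deriv g v = exp (log (deriv g v)) := (exp_log (hpos g hg v)).symm
    _ ≤ exp (ε + log (deriv g u)) := exp_le_exp.2 (by linarith)
    _ = exp ε * deriv g u := by rw [exp_add, exp_log (hpos g hg u)]

/-- The radius `r` is pulled back through `w` one letter at a time: after the `i` outermost
letters it is at most `r * exp (i * ε) * deriv (wordComp (w.drop i)) x / deriv (wordComp w) x`,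
which `hradius` keeps within the modulus of continuity `δ`. -/
lemma IsWord.abs_sub_mul_deriv_le_and_deriv_le {ε δ : ℝ}
    (hdiff : ∀ g ∈ G, Differentiable ℝ g) (hpos : ∀ g ∈ G, ∀ y, 0 < deriv g y)
    (hmod : LogModulus G ε δ) {w : List (ℝ → ℝ)} (hw : IsWord G w) {x r : ℝ} (hr : 0 ≤ r)
    (hradius : ∀ i ≤ w.length,
      r * exp (i * ε) * deriv (wordComp (w.drop i)) x ≤ δ * deriv (wordComp w) x)
    {z : ℝ} (hz : |wordComp w z - wordComp w x| ≤ r) :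
    |z - x| * deriv (wordComp w) x ≤ r * exp (w.length * ε) ∧
      deriv (wordComp w) x ≤ exp (w.length * ε) * deriv (wordComp w) z := by
  induction w generalizing r with
  | nil => simpa [deriv_wordComp_nil, wordComp] using hz
  | cons g w ih =>
    have hg : g ∈ G := hw g List.mem_cons_self
    have hg₀ : 0 < deriv g (wordComp w x) := hpos g hg _
    have hwx : 0 < deriv (wordComp w) x := hw.of_cons.deriv_wordComp_pos hdiff hpos x
    have hexp_succ : ∀ k : ℕ, exp ((k + 1 : ℕ) * ε) = exp ε * exp (k * ε) := fun k => by
      rw [← exp_add]; push_cast; ring_nf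
    set r' := r * exp ε / deriv g (wordComp w x) with hr'
    have hradius' : ∀ i ≤ w.length,
        r' * exp (i * ε) * deriv (wordComp (w.drop i)) x ≤ δ * deriv (wordComp w) x := by
      intro i hi
      have h := hradius (i + 1) (by simpa using hi)
      rw [hw.deriv_wordComp_cons hdiff, List.drop_succ_cons, hexp_succ] at h
      rw [hr', div_mul_eq_mul_div, div_mul_eq_mul_div, div_le_iff₀ hg₀]
      linarith
    have hr'δ : r' ≤ δ := by
      have h := hradius' 0 (Nat.zero_le _)
      simp only [CharP.cast_eq_zero, zero_mul, exp_zero, mul_one, List.drop_zero] at h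
      exact le_of_mul_le_mul_right h hwx
    have hstep : |wordComp w z - wordComp w x| ≤ r' := by
      refine abs_sub_le_of_abs_image_sub_le (hdiff g hg) (strictMono_of_deriv_pos (hpos g hg))
        (by positivity) (c := deriv g (wordComp w x) / exp ε) (fun u hu => ?_) ?_
      · rw [div_le_iff₀ (exp_pos ε), mul_comm]
        exact hmod.deriv_le_exp_mul hpos hg (hu.trans hr'δ)
      · exact hz.trans_eq (by rw [hr']; field_simp)
    obtain ⟨hdist, hderiv⟩ := ih hw.of_cons (by positivity) hradius' hstep
    have hgz : deriv g (wordComp w x) ≤ exp ε * deriv g (wordComp w z) :=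
      hmod.deriv_le_exp_mul hpos hg (abs_sub_comm (wordComp w z) _ ▸ hstep.trans hr'δ)
    rw [hw.deriv_wordComp_cons hdiff, hw.deriv_wordComp_cons hdiff, List.length_cons, hexp_succ]
    constructor
    · calc |z - x| * (deriv g (wordComp w x) * deriv (wordComp w) x)
          = |z - x| * deriv (wordComp w) x * deriv g (wordComp w x) := by ring
        _ ≤ r' * exp (w.length * ε) * deriv g (wordComp w x) :=
          mul_le_mul_of_nonneg_right hdist hg₀.le
        _ = r * (exp ε * exp (w.length * ε)) := by rw [hr']; field_simp
    · calc deriv g (wordComp w x) * deriv (wordComp w) x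
          ≤ (exp ε * deriv g (wordComp w z)) * (exp (w.length * ε) * deriv (wordComp w) z) :=
            mul_le_mul hgz hderiv hwx.le (mul_nonneg (exp_pos _).le (hpos g hg _).le)
        _ = exp ε * exp (w.length * ε) * (deriv g (wordComp w z) * deriv (wordComp w) z) := by
          ring

lemma finite_setOf_deriv_wordComp (n : ℕ) (x : ℝ) :
    {d : ℝ | ∃ w, IsWord G w ∧ w.length ≤ n ∧ d = deriv (wordComp w) x}.Finite := by
  refine (((List.finite_length_le G n).image (List.map Subtype.val)).image
    fun w => deriv (wordComp w) x).subset ?_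
  rintro d ⟨w, hw, hlen, rfl⟩
  exact ⟨w, ⟨w.attach.map fun g => ⟨g.1, hw g.1 g.2⟩, by simpa using hlen, by simp⟩, rfl⟩

lemma exists_isWord_deriv_eq_maxExp (n : ℕ) (x : ℝ) :
    ∃ w, IsWord G w ∧ w.length ≤ n ∧ deriv (wordComp w) x = maxExp G n x := by
  have hne : {d : ℝ | ∃ w, IsWord G w ∧ w.length ≤ n ∧ d = deriv (wordComp w) x}.Nonempty :=
    ⟨_, [], fun _ h => absurd h List.not_mem_nil, by simp, rfl⟩
  obtain ⟨w, hw, hlen, heq⟩ := hne.csSup_mem (finite_setOf_deriv_wordComp n x)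
  exact ⟨w, hw, hlen, heq.symm⟩

lemma one_le_maxExp (n : ℕ) (x : ℝ) : 1 ≤ maxExp G n x :=
  le_csSup (finite_setOf_deriv_wordComp n x).bddAbove
    ⟨[], fun _ h => absurd h List.not_mem_nil, by simp, (deriv_wordComp_nil x).symm⟩

lemma exists_exp_mul_lt_deriv_wordComp_of_lt_expExponent {a x : ℝ}
    (hx : ENNReal.ofReal a < expExponent G x) (N : ℕ) :
    ∃ m ≥ N, ∃ w, IsWord G w ∧ w.length ≤ m ∧ exp (m * a) < deriv (wordComp w) x := by
  obtain ⟨m, hNm, hm⟩ :=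
    (frequently_lt_of_lt_limsup (by isBoundedDefault) hx).forall_exists_of_atTop N
  obtain ⟨hlt, hlog_pos⟩ := ENNReal.ofReal_lt_ofReal_iff'.1 hm
  have hm0 : (0 : ℝ) < m := Nat.cast_pos.2 (Nat.pos_of_ne_zero fun h => by simp [h] at hlog_pos)
  obtain ⟨w, hw, hlen, heq⟩ := exists_isWord_deriv_eq_maxExp m x
  refine ⟨m, hNm, w, hw, hlen, ?_⟩
  rw [heq, ← lt_log_iff_exp_lt (zero_lt_one.trans_le (one_le_maxExp m x)), mul_comm]
  exact (lt_div_iff₀ hm0).1 hlt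

/-- By the chain rule: for every `i`, the block of the `i` outermost letters of `w` expands by at
least `exp (i * ε)` at the point of the orbit of `x` where it is applied. -/
def OuterExpanding (ε x : ℝ) (w : List (ℝ → ℝ)) : Prop :=
  ∀ i ≤ w.length, deriv (wordComp (w.drop i)) x * exp (i * ε) ≤ deriv (wordComp w) x

/-- Cut `w` where `i ↦ deriv (wordComp (w.drop i)) x * exp (i * ε)` is maximal. -/
lemma exists_outerExpanding_drop (ε x : ℝ) (w : List (ℝ → ℝ)) :
    ∃ j ≤ w.length, OuterExpanding ε x (w.drop j) ∧
      deriv (wordComp w) x ≤ deriv (wordComp (w.drop j)) x * exp (j * ε) := by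
  obtain ⟨j, hj, hmax⟩ := (Finset.range (w.length + 1)).exists_max_image
    (fun i => deriv (wordComp (w.drop i)) x * exp (i * ε)) ⟨0, by simp⟩
  rw [Finset.mem_range] at hj
  refine ⟨j, by omega, fun i hi => ?_, by simpa using hmax 0 (by simp)⟩
  rw [List.length_drop] at hi
  have h := hmax (j + i) (Finset.mem_range.2 (by omega))
  rw [Nat.cast_add, add_mul, exp_add, ← mul_assoc, mul_right_comm] at h
  rw [List.drop_drop]
  exact le_of_mul_le_mul_right h (exp_pos _)

lemma OuterExpanding.mul_exp_mul_deriv_drop_le {ε x δ r : ℝ} {w : List (ℝ → ℝ)}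
    (hexp : OuterExpanding ε x w) (hwx : 0 ≤ deriv (wordComp w) x) (hr : 0 ≤ r) (hrδ : r ≤ δ) :
    ∀ i ≤ w.length, r * exp (i * ε) * deriv (wordComp (w.drop i)) x ≤ δ * deriv (wordComp w) x :=
  fun i hi => calc
    r * exp (i * ε) * deriv (wordComp (w.drop i)) x
        = r * (deriv (wordComp (w.drop i)) x * exp (i * ε)) := by ring
    _ ≤ r * deriv (wordComp w) x := mul_le_mul_of_nonneg_left (hexp i hi) hr
    _ ≤ δ * deriv (wordComp w) x := mul_le_mul_of_nonneg_right hrδ hwx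

lemma exists_isWord_outerExpanding_of_lt_expExponent {a ε x : ℝ}
    (hx : ENNReal.ofReal a < expExponent G x) (hε : 0 ≤ ε) (hεa : 2 * ε ≤ a) (n : ℕ) :
    ∃ h, IsWord G h ∧ OuterExpanding ε x h ∧
      exp (n * a / 2) * exp (h.length * ε) < deriv (wordComp h) x := by
  obtain ⟨m, hnm, w, hw, hwm, hwx⟩ := exists_exp_mul_lt_deriv_wordComp_of_lt_expExponent hx n
  obtain ⟨j, hj, hexp, hjw⟩ := exists_outerExpanding_drop ε x w
  refine ⟨w.drop j, hw.drop j, hexp, ?_⟩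
  have hlen : (j : ℝ) + (w.drop j).length ≤ m := by
    rw [List.length_drop]; exact_mod_cast (show j + (w.length - j) ≤ m by omega)
  have hnm' : (n : ℝ) ≤ m := by exact_mod_cast hnm
  calc exp (n * a / 2) * exp ((w.drop j).length * ε)
      ≤ exp (m * a) * exp (-(j * ε)) := by
        rw [← exp_add, ← exp_add]
        exact exp_le_exp.2 (by nlinarith [Nat.cast_nonneg (α := ℝ) n])
    _ < deriv (wordComp w) x * exp (-(j * ε)) := by gcongr
    _ ≤ deriv (wordComp (w.drop j)) x := by
        rwa [exp_neg, ← div_eq_mul_inv, div_le_iff₀ (exp_pos _)]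

lemma volume_le_of_forall_abs_sub_mul_le {s : Set ℝ} {x c ρ : ℝ} (hc : 0 < c)
    (hs : ∀ z ∈ s, |z - x| * c ≤ ρ) : volume s ≤ ENNReal.ofReal (2 * (ρ / c)) :=
  (measure_mono fun z hz => (le_div_iff₀ hc).2 (hs z hz)).trans_eq (Real.volume_closedBall x _)

end

theorem uniform_expansion_words_at_expansive_point_general
    (G : Finset (ℝ → ℝ))
    (hC1 : ∀ g ∈ G, ContDiff ℝ 1 g)
    (hpos : ∀ g ∈ G, ∀ y : ℝ, 0 < deriv g y)
    (a ε₁ δ₀ : ℝ) (hε₁ : 0 < ε₁) (hε₁a : ε₁ < a / 100)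
    (hδ₀ : 0 < δ₀) (hmod : LogModulus G ε₁ δ₀)
    (x : ℝ) (hx : ENNReal.ofReal a < expExponent G x) :
    ∀ n : ℕ, 1 ≤ n →
      ∃ h : List (ℝ → ℝ), IsWord G h ∧
        x ∈ wordComp h ⁻¹' Set.Icc (wordComp h x - δ₀ / 2) (wordComp h x + δ₀ / 2) ∧
        (∀ z ∈ wordComp h ⁻¹' Set.Icc (wordComp h x - δ₀ / 2) (wordComp h x + δ₀ / 2),
          Real.exp ((n : ℝ) * a / 2) < deriv (wordComp h) z) ∧
        volume (wordComp h ⁻¹' Set.Icc (wordComp h x - δ₀ / 2) (wordComp h x + δ₀ / 2))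
          < ENNReal.ofReal (δ₀ * Real.exp (-((n : ℝ) * a) / 2)) := by
  intro n _
  have hdiff : ∀ g ∈ G, Differentiable ℝ g := fun g hg => (hC1 g hg).differentiable one_ne_zero
  obtain ⟨h, hw, hexp, hgrowth⟩ :=
    exists_isWord_outerExpanding_of_lt_expExponent hx hε₁.le (by linarith) n
  have hhx : 0 < deriv (wordComp h) x := hw.deriv_wordComp_pos hdiff hpos x
  have hpull : ∀ z ∈ wordComp h ⁻¹' Metric.closedBall (wordComp h x) (δ₀ / 2),
      |z - x| * deriv (wordComp h) x ≤ δ₀ / 2 * exp (h.length * ε₁) ∧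
        deriv (wordComp h) x ≤ exp (h.length * ε₁) * deriv (wordComp h) z := fun z hz =>
    hw.abs_sub_mul_deriv_le_and_deriv_le hdiff hpos hmod (by positivity)
      (hexp.mul_exp_mul_deriv_drop_le hhx.le (by positivity) (by linarith)) hz
  simp only [← Real.closedBall_eq_Icc]
  refine ⟨h, hw, Metric.mem_closedBall_self (by positivity), fun z hz => ?_, ?_⟩
  · refine lt_of_mul_lt_mul_right ?_ (exp_pos (h.length * ε₁)).le
    rw [mul_comm (deriv _ z)]
    exact hgrowth.trans_le (hpull z hz).2
  · refine (volume_le_of_forall_abs_sub_mul_le hhx fun z hz => (hpull z hz).1).trans_lt ?_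
    rw [ENNReal.ofReal_lt_ofReal_iff (by positivity), neg_div, exp_neg,
      show ∀ c : ℝ, 2 * (δ₀ / 2 * c / deriv (wordComp h) x) = δ₀ * (c / deriv (wordComp h) x) by
        intro c; ring]
    gcongr
    rwa [div_lt_iff₀ hhx, inv_mul_eq_div, lt_div_iff₀' (exp_pos _)]

/-- If `λ_*(x) > a`, then for each `n ≥ 1` there is a word `h` uniformly expanding by at
least `e^{na/2}` on the preimage `I` of the interval `J` of radius `δ₀/2` about `h(x)`,
and `I` has length less than `δ₀ e^{-na/2}`. -/
theorem uniform_expansion_words_at_expansive_point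
    (G : Finset (ℝ → ℝ))
    (hC1 : ∀ g ∈ G, ContDiff ℝ 1 g)
    (hpos : ∀ g ∈ G, ∀ y : ℝ, 0 < deriv g y)
    (hinv : ∀ g ∈ G, ∃ h ∈ G, (∀ x : ℝ, h (g x) = x) ∧ (∀ x : ℝ, g (h x) = x))
    (a ε₁ δ₀ : ℝ) (ha : 0 < a) (hε₁ : 0 < ε₁) (hε₁a : ε₁ < a / 100)
    (hδ₀ : 0 < δ₀) (hmod : LogModulus G ε₁ δ₀)
    (x : ℝ) (hx : ENNReal.ofReal a < expExponent G x) :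
    ∀ n : ℕ, 1 ≤ n →
      ∃ h : List (ℝ → ℝ), IsWord G h ∧
        x ∈ wordComp h ⁻¹' Set.Icc (wordComp h x - δ₀ / 2) (wordComp h x + δ₀ / 2) ∧
        (∀ z ∈ wordComp h ⁻¹' Set.Icc (wordComp h x - δ₀ / 2) (wordComp h x + δ₀ / 2),
          Real.exp ((n : ℝ) * a / 2) < deriv (wordComp h) z) ∧
        volume (wordComp h ⁻¹' Set.Icc (wordComp h x - δ₀ / 2) (wordComp h x + δ₀ / 2))
          < ENNReal.ofReal (δ₀ * Real.exp (-((n : ℝ) * a) / 2)) :=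
  uniform_expansion_words_at_expansive_point_general G hC1 hpos a ε₁ δ₀ hε₁ hε₁a hδ₀ hmod x hx
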